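/- If A ⊆ ℕ has positive upper Banach density, then the difference set A − A = {a − b : a, b ∈ A, a ≥ b} is syndetic in ℕ. -/
import Mathlib


open Filter

noncomputable def upperCount (A : Set ℕ) (s : ℕ) : ℝ :=
  limsup (fun k : ℕ => ((A ∩ Set.Icc (k + 1) (k + s)).ncard : ℝ)) atTop

noncomputable def upperBanachDensity (A : Set ℕ) : ℝ :=
  limsup (fun s : ℕ => upperCount A s / s) atTop

/-- A set `S ⊆ ℕ` is syndetic: it has bounded gaps. -/
def SyndeticN (S : Set ℕ) : Prop :=
  ∃ M : ℕ, 0 < M ∧ ∀ n : ℕ, ∃ s ∈ S, n ≤ s ∧ s < n + M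

lemma upperCount_nonneg (A : Set ℕ) (s : ℕ) : 0 ≤ upperCount A s := by
  have hbdd : IsBoundedUnder (· ≤ ·) atTop
      (fun k : ℕ => ((A ∩ Set.Icc (k + 1) (k + s)).ncard : ℝ)) := by
    apply isBoundedUnder_of
    refine ⟨(s : ℝ), fun k => ?_⟩
    have h1 : (A ∩ Set.Icc (k + 1) (k + s)).ncard ≤ (Set.Icc (k + 1) (k + s)).ncard :=
      Set.ncard_le_ncard Set.inter_subset_right (Set.finite_Icc _ _)
    have h2 : (Set.Icc (k + 1) (k + s)).ncard = s := by
      rw [← Finset.coe_Icc, Set.ncard_coe_finset, Nat.card_Icc]; omega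
    have : (A ∩ Set.Icc (k + 1) (k + s)).ncard ≤ s := le_trans h1 (le_of_eq h2)
    exact_mod_cast this
  exact le_limsup_of_frequently_le
    (Frequently.of_forall fun k => by positivity) hbdd

/-- If `A ⊆ ℕ` has positive upper Banach density, then `A − A` is syndetic. -/
theorem diffSet_syndetic_of_pos_upperBanachDensity (A : Set ℕ)
    (h : 0 < upperBanachDensity A) :
    SyndeticN {d : ℕ | ∃ a ∈ A, ∃ b ∈ A, b ≤ a ∧ a - b = d} := by
  classical
  set D := {d : ℕ | ∃ a ∈ A, ∃ b ∈ A, b ≤ a ∧ a - b = d} with hDdef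
  by_contra hsyn
  -- A is nonempty
  have hA : A.Nonempty := by
    by_contra hne
    rw [Set.not_nonempty_iff_eq_empty] at hne
    have h1 : ∀ s, upperCount A s = 0 := by
      intro s
      unfold upperCount
      simp [hne, limsup_const]
    have h2 : upperBanachDensity A = 0 := by
      unfold upperBanachDensity
      simp [h1, limsup_const]
    linarith
  have hzero : (0 : ℕ) ∈ D := by
    obtain ⟨a, ha⟩ := hA
    exact ⟨a, ha, a, ha, le_refl a, Nat.sub_self a⟩
  -- gaps of every length
  have hgap : ∀ M : ℕ, 0 < M → ∃ n : ℕ, ∀ x ∈ D, x < n ∨ n + M ≤ x := by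
    intro M hM
    rw [SyndeticN] at hsyn
    push_neg at hsyn
    obtain ⟨n, hn⟩ := hsyn M hM
    exact ⟨n, fun x hx => by
      rcases lt_or_ge x n with h' | h'
      · exact Or.inl h'
      · exact Or.inr (hn x hx h')⟩
  -- construct the translates
  let t : ℕ → ℕ := fun j => Nat.rec 0
    (fun j tj => Classical.choose (hgap (tj + 1) (Nat.succ_pos _)) + tj) j
  have ht0 : t 0 = 0 := rfl
  have htsucc : ∀ j, t (j + 1) =
      Classical.choose (hgap (t j + 1) (Nat.succ_pos _)) + t j := fun j => rfl
  have hnspec : ∀ j, ∀ x ∈ D,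
      x < Classical.choose (hgap (t j + 1) (Nat.succ_pos _)) ∨
      Classical.choose (hgap (t j + 1) (Nat.succ_pos _)) + (t j + 1) ≤ x := fun j =>
    Classical.choose_spec (hgap (t j + 1) (Nat.succ_pos _))
  have hnpos : ∀ j, 1 ≤ Classical.choose (hgap (t j + 1) (Nat.succ_pos _)) := by
    intro j
    by_contra hc
    push_neg at hc
    have h0 : Classical.choose (hgap (t j + 1) (Nat.succ_pos _)) = 0 := by omega
    rcases hnspec j 0 hzero with h' | h' <;> omega
  have htmono : StrictMono t := by
    apply strictMono_nat_of_lt_succ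
    intro j
    rw [htsucc j]
    have := hnpos j
    omega
  have hdiff : ∀ i j : ℕ, i < j → t j - t i ∉ D := by
    intro i j hij hmem
    obtain ⟨j', rfl⟩ : ∃ j', j = j' + 1 := ⟨j - 1, by omega⟩
    have hij' : i ≤ j' := by omega
    have hti : t i ≤ t j' := htmono.monotone hij'
    rw [htsucc j'] at hmem
    have hn1 := hnpos j'
    rcases hnspec j' _ hmem with h' | h' <;> omega
  -- analytic part: find a dense window
  set d := upperBanachDensity A with hd
  obtain ⟨m, hm⟩ := exists_nat_gt (4 / d)
  have hmd : 2 < (m : ℝ) * (d / 2) := by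
    rw [div_lt_iff₀ h] at hm
    linarith
  have hmpos : (0 : ℝ) < m := by nlinarith
  set T := t m with hT
  -- find s
  have hcobdd : IsCoboundedUnder (· ≤ ·) atTop (fun s : ℕ => upperCount A s / s) :=
    isCoboundedUnder_le_of_le atTop
      (fun s => div_nonneg (upperCount_nonneg A s) (Nat.cast_nonneg s))
  have hfreq : ∃ᶠ s : ℕ in atTop, d / 2 < upperCount A s / s :=
    frequently_lt_of_lt_limsup hcobdd
      (by change d / 2 < upperBanachDensity A; linarith)
  obtain ⟨s, hsge, hsd⟩ := (eventually_ge_atTop (max T 1)).and_frequently hfreq |>.exists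
  have hT_le_s : T ≤ s := le_trans (le_max_left _ _) hsge
  have hs1 : 1 ≤ s := le_trans (le_max_right _ _) hsge
  have hspos : (0 : ℝ) < s := by exact_mod_cast hs1
  have hus : d / 2 * s < upperCount A s := by
    rw [lt_div_iff₀ hspos] at hsd
    linarith
  -- find k
  have hcobdd2 : IsCoboundedUnder (· ≤ ·) atTop
      (fun k : ℕ => ((A ∩ Set.Icc (k + 1) (k + s)).ncard : ℝ)) :=
    isCoboundedUnder_le_of_le atTop (fun k => Nat.cast_nonneg _)
  obtain ⟨k, hk⟩ := (frequently_lt_of_lt_limsup hcobdd2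
    (by change d / 2 * (s : ℝ) < upperCount A s; exact hus)).exists
  -- finite combinatorics
  set F : Finset ℕ := (Finset.Icc (k + 1) (k + s)).filter (· ∈ A) with hF
  have hFeq : A ∩ Set.Icc (k + 1) (k + s) = ↑F := by
    ext x
    simp only [hF, Set.mem_inter_iff, Set.mem_Icc, Finset.coe_filter, Finset.mem_Icc,
      Set.mem_setOf_eq]
    tauto
  have hFcard : d / 2 * s < (F.card : ℝ) := by
    rw [hFeq, Set.ncard_coe_finset] at hk
    exact hk
  set G : Finset ℕ := (Finset.range m).biUnion (fun i => F.image (· + t i)) with hG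
  have hGsub : G ⊆ Finset.Icc (k + 1) (k + s + T) := by
    intro x hx
    simp only [hG, Finset.mem_biUnion, Finset.mem_image, Finset.mem_range] at hx
    obtain ⟨i, him, a, haF, rfl⟩ := hx
    have haI : a ∈ Finset.Icc (k + 1) (k + s) := Finset.mem_filter.mp haF |>.1
    rw [Finset.mem_Icc] at haI ⊢
    have : t i ≤ T := htmono.monotone (le_of_lt him)
    omega
  have hGcard : G.card = m * F.card := by
    rw [hG, Finset.card_biUnion]
    · simp [Finset.card_image_of_injective _ (add_left_injective _)]
    · intro i hi j hj hij
      simp only [Finset.disjoint_left, Finset.mem_image]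
      rintro x ⟨a, haF, rfl⟩ ⟨b, hbF, hab⟩
      have haA : a ∈ A := (Finset.mem_filter.mp haF).2
      have hbA : b ∈ A := (Finset.mem_filter.mp hbF).2
      rcases lt_or_gt_of_ne hij with h' | h'
      · have hti : t i < t j := htmono h'
        exact hdiff i j h' ⟨a, haA, b, hbA, by omega, by omega⟩
      · have hti : t j < t i := htmono h'
        exact hdiff j i h' ⟨b, hbA, a, haA, by omega, by omega⟩
  have hIccCard : (Finset.Icc (k + 1) (k + s + T)).card = s + T := by
    rw [Nat.card_Icc]; omega
  have hle : m * F.card ≤ s + T := by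
    rw [← hGcard, ← hIccCard]
    exact Finset.card_le_card hGsub
  have hleR : (m : ℝ) * F.card ≤ 2 * s := by
    have h1 : (m * F.card : ℕ) ≤ 2 * s := by omega
    have := (Nat.cast_le (α := ℝ)).mpr h1
    push_cast at this
    linarith
  nlinarith [hFcard, hmd, hmpos, hspos]
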